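/- Let f be nonnegative and nondecreasing with f(0) = 0. For any rooted binary tree T on vertex set V of weighted graph G with n = |V| ≥ 2, there is a partition (A, B) of V with n/3 ≤ |A|, |B| ≤ 2n/3 such that w(A,B)/min(f(|A|), f(|B|)) ≤ cost_f(T)/(f(⌊2n/3⌋)·f(⌈n/3⌉)). -/

import Mathlib

open Finset

/-- A rooted binary tree whose leaves are labeled by elements of `Fin n`. -/
inductive HTree (n : ℕ) : Type where
  | leaf : Fin n → HTree n
  | node : HTree n → HTree n → HTree n

namespace HTree

variable {n : ℕ}

/-- The list of leaf labels, left to right. -/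
def leafList : HTree n → List (Fin n)
  | .leaf v => [v]
  | .node l r => l.leafList ++ r.leafList

/-- The set of leaf labels of a tree. -/
def leaves (T : HTree n) : Finset (Fin n) := T.leafList.toFinset

/-- `T` is a hierarchical clustering tree of the whole vertex set `Fin n`:
its leaves are in one-to-one correspondence with `Fin n`. -/
def IsFullTree (T : HTree n) : Prop := T.leafList.Nodup ∧ T.leaves = Finset.univ

/-- `|leaves(T[i ∨ j])|`: the number of leaves of the subtree rooted at the
lowest common ancestor of leaves `i` and `j`. -/
def lcaSize : HTree n → Fin n → Fin n → ℕ
  | .leaf _, _, _ => 1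
  | .node l r, i, j =>
    if i ∈ l.leaves ∧ j ∈ l.leaves then l.lcaSize i j
    else if i ∈ r.leaves ∧ j ∈ r.leaves then r.lcaSize i j
    else (l.leaves ∪ r.leaves).card

/-- `cost_G(T) = Σ_{{i,j}} w_{ij} |leaves(T[i ∨ j])|`, the sum being over
unordered pairs (represented as ordered pairs `p.1 < p.2`). -/
def pairCost (w : Fin n → Fin n → ℝ) (T : HTree n) : ℝ :=
  ∑ p ∈ Finset.univ.filter (fun p : Fin n × Fin n => p.1 < p.2),
    w p.1 p.2 * (T.lcaSize p.1 p.2 : ℝ)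

/-- `w(A, B)`: total weight of edges between `A` and `B`. -/
def cut (w : Fin n → Fin n → ℝ) (A B : Finset (Fin n)) : ℝ :=
  ∑ i ∈ A, ∑ j ∈ B, w i j

/-- The sum-of-splits formulation of the cost:
`Σ over internal splits S → (S₁,S₂) of |S| ⬝ w(S₁,S₂)`. -/
def splitCost (w : Fin n → Fin n → ℝ) : HTree n → ℝ
  | .leaf _ => 0
  | .node l r =>
      ((l.leaves ∪ r.leaves).card : ℝ) * cut w l.leaves r.leaves
        + splitCost w l + splitCost w r

/-- `Subtree t T`: `t` occurs as a subtree of `T`. -/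
inductive Subtree : HTree n → HTree n → Prop
  | refl (t : HTree n) : Subtree t t
  | left {t l r : HTree n} : Subtree t l → Subtree t (.node l r)
  | right {t l r : HTree n} : Subtree t r → Subtree t (.node l r)

end HTree

namespace HTree

/-- Generalized sum-of-splits cost: `Σ over splits S → (S₁,S₂) of f(|S|) w(S₁,S₂)`. -/
def splitCostF (f : ℕ → ℝ) (w : Fin n → Fin n → ℝ) : HTree n → ℝ
  | .leaf _ => 0
  | .node l r =>
      f ((l.leaves ∪ r.leaves).card) * cut w l.leaves r.leaves
        + splitCostF f w l + splitCostF f w r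

end HTree


/-!
Descend from the root into a child with more than `⌊2n/3⌋` leaves for as long as there is one.
This stops at a node `s` with more than `2n/3` leaves whose children both have at most `2n/3`
leaves, so the larger child `A` is balanced. Every edge leaving `A` is separated either at `s`
or at an ancestor of `s`, and each of these splits has more than `⌊2n/3⌋` leaves, so
`f(⌊2n/3⌋) · w(A, Aᶜ) ≤ cost_f(T)`; finally `f(⌈n/3⌉) ≤ min(f |A|, f |Aᶜ|)` by monotonicity.
-/

namespace HTree

variable {n : ℕ}

@[simp]
lemma leaves_leaf (v : Fin n) : (HTree.leaf v).leaves = {v} := by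
  simp [leaves, leafList]

@[simp]
lemma leaves_node (l r : HTree n) : (HTree.node l r).leaves = l.leaves ∪ r.leaves := by
  simp [leaves, leafList]

lemma disjoint_leaves_of_nodup {l r : HTree n} (h : (HTree.node l r).leafList.Nodup) :
    Disjoint l.leaves r.leaves := by
  simp only [leafList, List.nodup_append] at h
  exact List.disjoint_toFinset_iff_disjoint.2 fun a ha hb => h.2.2 a ha a hb rfl

namespace Subtree

lemma trans {a b c : HTree n} (hab : Subtree a b) (hbc : Subtree b c) : Subtree a c := by
  induction hbc with
  | refl => exact hab
  | left _ ih => exact .left ih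
  | right _ ih => exact .right ih

lemma leafList_sublist {t T : HTree n} (h : Subtree t T) : t.leafList.Sublist T.leafList := by
  induction h with
  | refl => exact .refl _
  | left _ ih => exact ih.trans (List.sublist_append_left _ _)
  | right _ ih => exact ih.trans (List.sublist_append_right _ _)

lemma leaves_subset {t T : HTree n} (h : Subtree t T) : t.leaves ⊆ T.leaves := fun _ hx => by
  simp only [leaves, List.mem_toFinset] at hx ⊢
  exact h.leafList_sublist.mem hx

lemma nodup {t T : HTree n} (h : Subtree t T) (hT : T.leafList.Nodup) : t.leafList.Nodup :=
  hT.sublist h.leafList_sublist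

end Subtree

section Cut

variable {w : Fin n → Fin n → ℝ}

lemma cut_nonneg (hw : ∀ i j, 0 ≤ w i j) (A B : Finset (Fin n)) : 0 ≤ cut w A B :=
  sum_nonneg fun _ _ => sum_nonneg fun _ _ => hw _ _

lemma cut_comm (hsymm : ∀ i j, w i j = w j i) (A B : Finset (Fin n)) :
    cut w A B = cut w B A := by
  rw [cut, cut, sum_comm]
  exact sum_congr rfl fun i _ => sum_congr rfl fun j _ => hsymm _ _

lemma cut_mono_left (hw : ∀ i j, 0 ≤ w i j) {A A' : Finset (Fin n)} (h : A ⊆ A')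
    (B : Finset (Fin n)) : cut w A B ≤ cut w A' B :=
  sum_le_sum_of_subset_of_nonneg h fun i _ _ => sum_nonneg fun j _ => hw i j

lemma cut_union_right (A : Finset (Fin n)) {B C : Finset (Fin n)} (h : Disjoint B C) :
    cut w A (B ∪ C) = cut w A B + cut w A C := by
  simp only [cut, sum_union h, sum_add_distrib]

lemma cut_sdiff_of_child (hsymm : ∀ i j, w i j = w j i) {L R A : Finset (Fin n)}
    (hLR : Disjoint L R) (hA : A = L ∨ A = R) : cut w A ((L ∪ R) \ A) = cut w L R := by
  rcases hA with rfl | rfl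
  · rw [union_sdiff_cancel_left hLR]
  · rw [union_sdiff_cancel_right hLR, cut_comm hsymm]

variable {f : ℕ → ℝ}

lemma mul_cut_le_mul_cut (hf : ∀ m, 0 ≤ f m) (hfmono : Monotone f) (hw : ∀ i j, 0 ≤ w i j)
    {M N : ℕ} (hMN : M ≤ N) {A B : Finset (Fin n)} (hAB : A ⊆ B) (C : Finset (Fin n)) :
    f M * cut w A C ≤ f N * cut w B C :=
  mul_le_mul (hfmono hMN) (cut_mono_left hw hAB C) (cut_nonneg hw _ _) (hf N)

lemma splitCostF_nonneg (hf : ∀ m, 0 ≤ f m) (hw : ∀ i j, 0 ≤ w i j) (T : HTree n) :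
    0 ≤ splitCostF f w T := by
  induction T with
  | leaf => exact le_rfl
  | node l r ihl ihr =>
    have := mul_nonneg (hf (l.leaves ∪ r.leaves).card) (cut_nonneg hw l.leaves r.leaves)
    simp only [splitCostF]
    linarith

/-- The edges from `A ⊆ t` to the leaves of `T` outside `t` are separated at strict ancestors
of `t`, all of which have at least `|t|` leaves. -/
lemma Subtree.mul_cut_sdiff_add_splitCostF_le (hf : ∀ m, 0 ≤ f m) (hfmono : Monotone f)
    (hsymm : ∀ i j, w i j = w j i) (hw : ∀ i j, 0 ≤ w i j) {t T : HTree n} (h : Subtree t T)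
    (hT : T.leafList.Nodup) {A : Finset (Fin n)} (hA : A ⊆ t.leaves) {M : ℕ}
    (hM : M ≤ t.leaves.card) :
    f M * cut w A (T.leaves \ t.leaves) + splitCostF f w t ≤ splitCostF f w T := by
  induction h with
  | refl => simp [cut]
  | @left l r h ih =>
    have hlr := disjoint_leaves_of_nodup hT
    have htl := h.leaves_subset
    have hrest : (l.leaves ∪ r.leaves) \ t.leaves = (l.leaves \ t.leaves) ∪ r.leaves := by
      rw [union_sdiff_distrib, sdiff_eq_self_of_disjoint (hlr.mono_left htl).symm]
    have hsplit := mul_cut_le_mul_cut hf hfmono hw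
      (hM.trans (card_le_card (htl.trans (subset_union_left (s₂ := r.leaves)))))
      (hA.trans htl) r.leaves
    have := ih hT.of_append_left
    have := splitCostF_nonneg hf hw r
    rw [leaves_node, hrest, cut_union_right _ (hlr.mono_left sdiff_subset)]
    simp only [splitCostF]
    linarith
  | @right l r h ih =>
    have hlr := disjoint_leaves_of_nodup hT
    have htr := h.leaves_subset
    have hrest : (l.leaves ∪ r.leaves) \ t.leaves = l.leaves ∪ (r.leaves \ t.leaves) := by
      rw [union_sdiff_distrib, sdiff_eq_self_of_disjoint (hlr.mono_right htr)]
    have hsplit := mul_cut_le_mul_cut hf hfmono hw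
      (hM.trans (card_le_card (htr.trans (subset_union_right (s₁ := l.leaves)))))
      (hA.trans htr) l.leaves
    rw [cut_comm hsymm r.leaves] at hsplit
    have := ih hT.of_append_right
    have := splitCostF_nonneg hf hw l
    rw [leaves_node, hrest, cut_union_right _ (hlr.mono_right sdiff_subset)]
    simp only [splitCostF]
    linarith

lemma mul_cut_child_le_splitCostF (hf : ∀ m, 0 ≤ f m) (hfmono : Monotone f)
    (hsymm : ∀ i j, w i j = w j i) (hw : ∀ i j, 0 ≤ w i j) {l r T : HTree n}
    (h : Subtree (.node l r) T) (hT : T.leafList.Nodup) {A : Finset (Fin n)}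
    (hA : A = l.leaves ∨ A = r.leaves) {M : ℕ}
    (hM : M ≤ (l.leaves ∪ r.leaves).card) :
    f M * cut w A (T.leaves \ A) ≤ splitCostF f w T := by
  have hlr := disjoint_leaves_of_nodup (h.nodup hT)
  have hAs : A ⊆ l.leaves ∪ r.leaves := by
    rcases hA with rfl | rfl
    exacts [subset_union_left, subset_union_right]
  have hs := h.leaves_subset
  rw [leaves_node] at hs
  have hrest :
      T.leaves \ A = (T.leaves \ (l.leaves ∪ r.leaves)) ∪ ((l.leaves ∪ r.leaves) \ A) :=
    (sdiff_union_sdiff_cancel hs hAs).symm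
  have hancestors := h.mul_cut_sdiff_add_splitCostF_le hf hfmono hsymm hw hT
    (leaves_node l r ▸ hAs) (leaves_node l r ▸ hM)
  have hsplit : f M * cut w l.leaves r.leaves
      ≤ f (l.leaves ∪ r.leaves).card * cut w l.leaves r.leaves :=
    mul_le_mul_of_nonneg_right (hfmono hM) (cut_nonneg hw _ _)
  rw [leaves_node] at hancestors
  rw [hrest, cut_union_right _ (disjoint_sdiff_self_left.mono_right sdiff_subset),
    cut_sdiff_of_child hsymm hlr hA]
  have := splitCostF_nonneg hf hw l
  have := splitCostF_nonneg hf hw r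
  simp only [splitCostF] at hancestors
  linarith

end Cut

lemma exists_subtree_node_card_gt {k : ℕ} (hk : 1 ≤ k) (t : HTree n) (ht : k < t.leaves.card) :
    ∃ l r, Subtree (.node l r) t ∧ k < (l.leaves ∪ r.leaves).card ∧
      l.leaves.card ≤ k ∧ r.leaves.card ≤ k := by
  induction t with
  | leaf v => simp only [leaves_leaf, card_singleton] at ht; omega
  | node l r ihl ihr =>
    by_cases hl : k < l.leaves.card
    · obtain ⟨a, b, hab, h⟩ := ihl hl
      exact ⟨a, b, hab.trans (.left (.refl l)), h⟩
    by_cases hr : k < r.leaves.card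
    · obtain ⟨a, b, hab, h⟩ := ihr hr
      exact ⟨a, b, hab.trans (.right (.refl r)), h⟩
    exact ⟨l, r, .refl _, by simpa using ht, by omega, by omega⟩

lemma IsFullTree.exists_balanced_child {T : HTree n} (hT : T.IsFullTree) (hn : 2 ≤ n) :
    ∃ l r A, Subtree (.node l r) T ∧ (A = l.leaves ∨ A = r.leaves) ∧
      2 * n / 3 < (l.leaves ∪ r.leaves).card ∧ n ≤ 3 * A.card ∧ 3 * A.card ≤ 2 * n := by
  have hT_card : T.leaves.card = n := by rw [hT.2, card_univ, Fintype.card_fin]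
  obtain ⟨l, r, h, hbig, hl, hr⟩ := exists_subtree_node_card_gt (k := 2 * n / 3) (by omega) T
    (by omega)
  have hsum : (l.leaves ∪ r.leaves).card = l.leaves.card + r.leaves.card :=
    card_union_of_disjoint (disjoint_leaves_of_nodup (h.nodup hT.1))
  rcases le_total l.leaves.card r.leaves.card with hlr | hrl
  · exact ⟨l, r, r.leaves, h, .inr rfl, hbig, by omega, by omega⟩
  · exact ⟨l, r, l.leaves, h, .inl rfl, hbig, by omega, by omega⟩

end HTree

lemma div_three_le_and_le_two_mul_div_three {n m : ℕ} (h₁ : n ≤ 3 * m)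
    (h₂ : 3 * m ≤ 2 * n) :
    (n : ℝ) / 3 ≤ m ∧ (m : ℝ) ≤ 2 * n / 3 := by
  have h₁' : (n : ℝ) ≤ 3 * m := by exact_mod_cast h₁
  have h₂' : 3 * (m : ℝ) ≤ 2 * n := by exact_mod_cast h₂
  constructor <;> linarith

theorem exists_sparse_cut_generalized_general (n : ℕ) (hn : 2 ≤ n)
    (f : ℕ → ℝ) (hfnn : ∀ m, 0 ≤ f m) (hfmono : Monotone f)
    (hfpos : 0 < f ((n + 2) / 3))
    (w : Fin n → Fin n → ℝ) (hsymm : ∀ i j, w i j = w j i)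
    (hnonneg : ∀ i j, 0 ≤ w i j)
    (T : HTree n) (hT : T.IsFullTree) :
    ∃ A : Finset (Fin n),
      (n : ℝ) / 3 ≤ A.card ∧ (A.card : ℝ) ≤ 2 * n / 3 ∧
      (n : ℝ) / 3 ≤ Aᶜ.card ∧ ((Aᶜ.card : ℝ)) ≤ 2 * n / 3 ∧
      HTree.cut w A Aᶜ / min (f A.card) (f Aᶜ.card)
        ≤ T.splitCostF f w / (f ((2 * n) / 3) * f ((n + 2) / 3)) := by
  obtain ⟨l, r, A, hsub, hA, hbig, hA₁, hA₂⟩ := hT.exists_balanced_child hn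
  have hAc : Aᶜ.card = n - A.card := by rw [card_compl, Fintype.card_fin]
  obtain ⟨hA_ge, hA_le⟩ := div_three_le_and_le_two_mul_div_three hA₁ hA₂
  obtain ⟨hAc_ge, hAc_le⟩ :=
    div_three_le_and_le_two_mul_div_three (n := n) (m := Aᶜ.card) (by omega) (by omega)
  refine ⟨A, hA_ge, hA_le, hAc_ge, hAc_le, ?_⟩
  have hcut : f (2 * n / 3) * HTree.cut w A Aᶜ ≤ T.splitCostF f w := by
    simpa [hT.2, compl_eq_univ_sdiff] using
      HTree.mul_cut_child_le_splitCostF hfnn hfmono hsymm hnonneg hsub hT.1 hA hbig.le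
  have hmin : f ((n + 2) / 3) ≤ min (f A.card) (f Aᶜ.card) :=
    le_min (hfmono (by omega)) (hfmono (by omega))
  have hfM : 0 < f (2 * n / 3) := hfpos.trans_le (hfmono (by omega))
  calc HTree.cut w A Aᶜ / min (f A.card) (f Aᶜ.card)
      ≤ HTree.cut w A Aᶜ / f ((n + 2) / 3) :=
        div_le_div_of_nonneg_left (HTree.cut_nonneg hnonneg _ _) hfpos hmin
    _ = f (2 * n / 3) * HTree.cut w A Aᶜ / (f (2 * n / 3) * f ((n + 2) / 3)) :=
        (mul_div_mul_left _ _ hfM.ne').symm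
    _ ≤ _ := div_le_div_of_nonneg_right hcut (by positivity)

/-- Generalized sparsest-cut lemma: for any full tree `T` there is a balanced
partition `(A, Aᶜ)` with `n/3 ≤ |A|, |Aᶜ| ≤ 2n/3` and
`w(A,Aᶜ)/min(f|A|, f|Aᶜ|) ≤ cost_f(T)/(f(⌊2n/3⌋) f(⌈n/3⌉))`. -/
theorem exists_sparse_cut_generalized (n : ℕ) (hn : 2 ≤ n)
    (f : ℕ → ℝ) (hf0 : f 0 = 0) (hfnn : ∀ m, 0 ≤ f m) (hfmono : Monotone f)
    (hfpos : 0 < f ((n + 2) / 3))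
    (w : Fin n → Fin n → ℝ) (hsymm : ∀ i j, w i j = w j i)
    (hnonneg : ∀ i j, 0 ≤ w i j)
    (T : HTree n) (hT : T.IsFullTree) :
    ∃ A : Finset (Fin n),
      (n : ℝ) / 3 ≤ A.card ∧ (A.card : ℝ) ≤ 2 * n / 3 ∧
      (n : ℝ) / 3 ≤ Aᶜ.card ∧ ((Aᶜ.card : ℝ)) ≤ 2 * n / 3 ∧
      HTree.cut w A Aᶜ / min (f A.card) (f Aᶜ.card)
        ≤ T.splitCostF f w / (f ((2 * n) / 3) * f ((n + 2) / 3)) :=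
  exists_sparse_cut_generalized_general n hn f hfnn hfmono hfpos w hsymm hnonneg T hT
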